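/- Let T ∈ R_α(Q) be Schurian and let ψ be a one-parameter subgroup of Gl_α with ψ(t)∗T = t.T for all t ∈ ℂ*. Then for every M ∈ Att(T), the intersection of the Gl_α-orbit of M with Att(T) equals the U_ψ-orbit of M inside Att(T): {g∗M : g ∈ Gl_α} ∩ Att(T) = {u∗M : u ∈ U_ψ}. In particular, for g ∈ Gl_α and M ∈ Att(T), g∗M ∈ Att(T) if and only if g∗M = u∗M for some u ∈ U_ψ. -/

import Mathlib

/-!
If `M` and `g∗M` both flow to `T`, conjugate `g` by `ψ(z)`. In the eigenbasis of `ψ` its entries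
scale by `z ^ (e i - e j)`, so after rescaling by `z ^ (-d)`, `d` the least weight of a nonzero
entry, it converges to its weight-`d` component `c`. Passing to the limit in
`ψ(z) g ψ(z)⁻¹ · (ψ(z), z).M = (ψ(z), z).(g∗M) · ψ(z) g ψ(z)⁻¹` shows that `c` intertwines `T`,
hence is scalar as `T` is Schurian; a nonzero scalar has weight `0`, so `d = 0` and the rescaling
was trivial, i.e. `g ∈ U_ψ`. Conversely, for `u ∈ U_ψ` the conjugates `ψ(z) u^{±1} ψ(z)⁻¹`
converge to `μ^{±1}`, which fix `T`.
-/

open Filter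
open scoped Topology

namespace QuivC

variable {V A : Type} [Fintype V] [Fintype A] (s t : A → V) (α : V → ℕ) (γ : A → ℤ)

/-- The representation variety `R_α(Q) = ⊕_a Mat_{α_{t(a)} × α_{s(a)}}(ℂ)`. -/
abbrev RA : Type := ∀ a : A, Matrix (Fin (α (t a))) (Fin (α (s a))) ℂ

/-- The base change group `Gl_α = ∏_q GL_{α_q}(ℂ)`. -/
abbrev GLa : Type := ∀ q : V, GL (Fin (α q)) ℂ

/-- Base change action: `(g∗M)_a = g_{t(a)} M_a g_{s(a)}^{-1}`. -/
noncomputable def bc (g : GLa α) (M : RA s t α) : RA s t α :=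
  fun a => (g (t a) : Matrix (Fin (α (t a))) (Fin (α (t a))) ℂ) * M a *
    (((g (s a))⁻¹ : GL (Fin (α (s a))) ℂ) : Matrix (Fin (α (s a))) (Fin (α (s a))) ℂ)

/-- A one-parameter subgroup of `Gl_α`, given by the data of conjugating matrices
`h_q` and integer exponents: `ψ_q(z) = h_q · diag(z^{e_{q,i}}) · h_q^{-1}`. -/
structure OneParam (α : V → ℕ) where
  h : ∀ q, GL (Fin (α q)) ℂ
  e : ∀ q, Fin (α q) → ℤ

/-- The value `ψ_q(z)` of a one-parameter subgroup (a matrix; invertible for `z ≠ 0`). -/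
noncomputable def OneParam.val {α : V → ℕ} (ψ : OneParam α) (z : ℂ) (q : V) :
    Matrix (Fin (α q)) (Fin (α q)) ℂ :=
  (ψ.h q : Matrix _ _ ℂ) * Matrix.diagonal (fun i => z ^ (ψ.e q i)) *
    (((ψ.h q)⁻¹ : GL (Fin (α q)) ℂ) : Matrix _ _ ℂ)

/-- The action of `ψ̂(z) = (ψ(z), z^n) ∈ Ĝ_α` on `R_α(Q)`:
`(ψ̂(z).M)_a = (z^n)^{-γ_a} ψ(z)_{t(a)} M_a ψ(z)_{s(a)}^{-1}`
(for `z ≠ 0` one has `ψ(z)^{-1} = ψ(z⁻¹)`). -/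
noncomputable def hatAct (ψ : OneParam α) (n : ℤ) (z : ℂ) (M : RA s t α) : RA s t α :=
  fun a => ((z ^ n) ^ (-(γ a))) • (ψ.val z (t a) * M a * ψ.val z⁻¹ (s a))

end QuivC

namespace QuivC

open Filter
open scoped Topology

variable {V A : Type} [Fintype V] [Fintype A] (s t : A → V) (α : V → ℕ) (γ : A → ℤ)

/-- `T ∈ R_α(Q)` is Schurian: every intertwining tuple of matrices is scalar. -/
def Schurian (T : RA s t α) : Prop :=
  ∀ φ : ∀ q, Matrix (Fin (α q)) (Fin (α q)) ℂ,
    (∀ a, φ (t a) * T a = T a * φ (s a)) →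
    ∃ c : ℂ, ∀ q, φ q = c • (1 : Matrix (Fin (α q)) (Fin (α q)) ℂ)

/-- The subgroup `U_ψ = {g : lim_{z→0} ψ_q(z) g_q ψ_q(z)^{-1} = μ·Id for all q,
for some μ ∈ ℂ*}`. -/
def Upsi (ψ : OneParam α) : Set (GLa α) :=
  {g | ∃ μ : ℂ, μ ≠ 0 ∧ ∀ q,
    Tendsto (fun z : ℂ => ψ.val z q * (g q : Matrix _ _ ℂ) * ψ.val z⁻¹ q)
      (𝓝[≠] 0) (𝓝 (μ • (1 : Matrix (Fin (α q)) (Fin (α q)) ℂ)))}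

/-- The action of the pair `(ψ(z), z)`:
`((ψ(z),z).M)_a = z^{-γ_a} ψ(z)_{t(a)} M_a ψ(z)_{s(a)}^{-1}`. -/
noncomputable def attAct (ψ : OneParam α) (z : ℂ) (M : RA s t α) : RA s t α :=
  fun a => (z ^ (-(γ a))) • (ψ.val z (t a) * M a * ψ.val z⁻¹ (s a))

/-- The lifted attracting set `Att(T) = {M : lim_{z→0} (ψ(z),z).M = T}`. -/
def Att (ψ : OneParam α) (T : RA s t α) : Set (RA s t α) :=
  {M | Tendsto (fun z : ℂ => attAct s t α γ ψ z M) (𝓝[≠] 0) (𝓝 T)}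

/-- `ψ(z)∗T = z.T` for all `z ∈ ℂ*`: `T` is a lift of a torus fixed point with
associated one-parameter subgroup `ψ`. -/
def FixedLift (ψ : OneParam α) (T : RA s t α) : Prop :=
  ∀ z : ℂ, z ≠ 0 → ∀ a, ψ.val z (t a) * T a * ψ.val z⁻¹ (s a) = (z ^ (γ a)) • T a

/-- `ψ` is in standard form: each `ψ_q(z)` is the diagonal matrix
`diag(z^{e_{q,i}})`. -/
def StdForm (ψ : OneParam α) : Prop :=
  ∀ (z : ℂ) (q : V), ψ.val z q = Matrix.diagonal (fun i => z ^ (ψ.e q i))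

end QuivC

section MatrixLimits

open Filter
open scoped Topology

variable {ι m n p 𝕜 : Type*} {l : Filter ι}

theorem Filter.Tendsto.matrix_mul [Fintype n] [CommRing 𝕜] [TopologicalSpace 𝕜]
    [IsTopologicalRing 𝕜] {f : ι → Matrix m n 𝕜} {g : ι → Matrix n p 𝕜}
    {A : Matrix m n 𝕜} {B : Matrix n p 𝕜} (hf : Tendsto f l (𝓝 A)) (hg : Tendsto g l (𝓝 B)) :
    Tendsto (fun x => f x * g x) l (𝓝 (A * B)) := by
  have hc : Continuous fun x : Matrix m n 𝕜 × Matrix n p 𝕜 => x.1 * x.2 :=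
    continuous_fst.matrix_mul continuous_snd
  have h := (hc.tendsto (A, B)).comp (hf.prodMk_nhds hg)
  exact h

theorem Filter.Tendsto.matrix_inv [Fintype n] [DecidableEq n] [Field 𝕜] [TopologicalSpace 𝕜]
    [IsTopologicalDivisionRing 𝕜] {f : ι → Matrix n n 𝕜} {A : Matrix n n 𝕜}
    (hf : Tendsto f l (𝓝 A)) (hA : A.det ≠ 0) : Tendsto (fun x => (f x)⁻¹) l (𝓝 A⁻¹) := by
  have hinv : ContinuousAt Ring.inverse A.det := by
    rw [Ring.inverse_eq_inv']
    exact continuousAt_inv₀ hA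
  exact (continuousAt_matrix_inv A hinv).tendsto.comp hf

end MatrixLimits

theorem Units.mul_mul_inv_eq_smul_one {R A : Type*} [CommSemiring R] [Semiring A] [Algebra R A]
    (u : Aˣ) (x : A) (r : R) : ↑u * x * ↑u⁻¹ = r • 1 ↔ x = r • 1 := by
  rw [Units.mul_inv_eq_iff_eq_mul, smul_one_mul, ← mul_smul_one, Units.mul_right_inj]

namespace QuivC

open Filter
open scoped Topology

section WeightComponent

variable {n 𝕜 : Type*} [DecidableEq n]

/-- The component of `X` of weight `d` for the grading of `Matrix n n 𝕜` in which the entry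
`(i, j)` has weight `e i - e j`, i.e. the one on which `diagonal (z ^ e)` acts by `z ^ d`. -/
def weightComponent [Zero 𝕜] (e : n → ℤ) (d : ℤ) (X : Matrix n n 𝕜) : Matrix n n 𝕜 :=
  Matrix.of fun i j => if e i - e j = d then X i j else 0

theorem weightComponent_eq_smul_one [Semiring 𝕜] {e : n → ℤ} {d : ℤ} {X : Matrix n n 𝕜}
    {μ : 𝕜} (h : weightComponent e d X = μ • 1) {i j : n} (hX : X i j ≠ 0) (hw : e i - e j = d) :
    d = 0 ∧ μ ≠ 0 := by
  have hij := congrFun (congrFun h i) j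
  simp only [weightComponent, Matrix.of_apply, if_pos hw, Matrix.smul_apply, Matrix.one_apply,
    smul_eq_mul] at hij
  obtain rfl : i = j := by
    by_contra hne
    simp [hne, hX] at hij
  refine ⟨by omega, fun hμ => ?_⟩
  simp [hμ, hX] at hij

theorem tendsto_zpow_smul_diagonal_mul_mul_diagonal [Fintype n] [Field 𝕜] [TopologicalSpace 𝕜]
    [IsTopologicalRing 𝕜] {e : n → ℤ} {d : ℤ} {X : Matrix n n 𝕜}
    (hd : ∀ i j, X i j ≠ 0 → d ≤ e i - e j) :
    Tendsto (fun z : 𝕜 => z ^ (-d) •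
        (Matrix.diagonal (fun i => z ^ e i) * X * Matrix.diagonal (fun i => z⁻¹ ^ e i)))
      (𝓝[≠] 0) (𝓝 (weightComponent e d X)) := by
  refine tendsto_pi_nhds.2 fun i => tendsto_pi_nhds.2 fun j => ?_
  have hentry : ∀ᶠ z in 𝓝[≠] (0 : 𝕜), z ^ (e i - e j - d) * X i j = (z ^ (-d) •
      (Matrix.diagonal (fun i => z ^ e i) * X * Matrix.diagonal (fun i => z⁻¹ ^ e i))) i j := by
    filter_upwards [self_mem_nhdsWithin] with z (hz : z ≠ 0)
    simp only [Matrix.smul_apply, Matrix.mul_diagonal, Matrix.diagonal_mul, smul_eq_mul, inv_zpow']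
    rw [sub_eq_add_neg, add_comm, sub_eq_add_neg, zpow_add₀ hz, zpow_add₀ hz]
    ring
  refine Tendsto.congr' hentry ?_
  simp only [weightComponent, Matrix.of_apply]
  split_ifs with hw
  · simp [hw, tendsto_const_nhds]
  by_cases hX : X i j = 0
  · simp [hX, tendsto_const_nhds]
  have hpos : 0 < e i - e j - d := by have := hd i j hX; omega
  have hlim : Tendsto (fun z : 𝕜 => z ^ (e i - e j - d)) (𝓝[≠] 0) (𝓝 0) := by
    lift e i - e j - d to ℕ using hpos.le with k hk
    simp only [zpow_natCast]
    exact ((continuous_pow k).tendsto' 0 0 (zero_pow (by omega))).mono_left nhdsWithin_le_nhds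
  simpa using hlim.mul_const (X i j)

end WeightComponent

section OneParam

variable {V : Type} {α : V → ℕ}

noncomputable def OneParam.conj (ψ : OneParam α) (z : ℂ) (q : V)
    (X : Matrix (Fin (α q)) (Fin (α q)) ℂ) : Matrix (Fin (α q)) (Fin (α q)) ℂ :=
  ψ.val z q * X * ψ.val z⁻¹ q

/-- `X` written in the basis in which every `ψ.val z q` is diagonal. -/
noncomputable def OneParam.inEigenbasis (ψ : OneParam α) (q : V)
    (X : Matrix (Fin (α q)) (Fin (α q)) ℂ) : Matrix (Fin (α q)) (Fin (α q)) ℂ :=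
  (↑(ψ.h q)⁻¹ : Matrix _ _ ℂ) * X * (ψ.h q : Matrix _ _ ℂ)

variable (ψ : OneParam α) {z : ℂ} (q : V)

theorem OneParam.isUnit_inEigenbasis (g : GL (Fin (α q)) ℂ) : IsUnit (ψ.inEigenbasis q g) := by
  simp [OneParam.inEigenbasis]

theorem OneParam.val_mul_val_inv (hz : z ≠ 0) : ψ.val z q * ψ.val z⁻¹ q = 1 := by
  have hdiag : Matrix.diagonal (fun i => z ^ ψ.e q i) * Matrix.diagonal (fun i => z⁻¹ ^ ψ.e q i)
      = 1 := by
    rw [Matrix.diagonal_mul_diagonal, ← Matrix.diagonal_one]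
    congr 1
    funext i
    rw [inv_zpow, mul_inv_cancel₀ (zpow_ne_zero _ hz)]
  simp only [OneParam.val, Matrix.mul_assoc, Units.inv_mul_cancel_left]
  rw [← Matrix.mul_assoc (Matrix.diagonal _), hdiag, Matrix.one_mul, Units.mul_inv]

theorem OneParam.val_inv_mul_val (hz : z ≠ 0) : ψ.val z⁻¹ q * ψ.val z q = 1 := by
  simpa using ψ.val_mul_val_inv q (inv_ne_zero hz)

theorem OneParam.conj_mul (hz : z ≠ 0) (X Y : Matrix (Fin (α q)) (Fin (α q)) ℂ) :
    ψ.conj z q (X * Y) = ψ.conj z q X * ψ.conj z q Y := by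
  simp only [OneParam.conj, Matrix.mul_assoc, ← Matrix.mul_assoc (ψ.val z⁻¹ q) (ψ.val z q),
    ψ.val_inv_mul_val q hz, Matrix.one_mul]

theorem OneParam.conj_one (hz : z ≠ 0) : ψ.conj z q 1 = 1 := by
  rw [OneParam.conj, Matrix.mul_one, ψ.val_mul_val_inv q hz]

theorem OneParam.conj_eq (X : Matrix (Fin (α q)) (Fin (α q)) ℂ) :
    ψ.conj z q X = (ψ.h q : Matrix _ _ ℂ) * (Matrix.diagonal (fun i => z ^ ψ.e q i) *
      ψ.inEigenbasis q X * Matrix.diagonal (fun i => z⁻¹ ^ ψ.e q i)) *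
      (↑(ψ.h q)⁻¹ : Matrix _ _ ℂ) := by
  simp only [OneParam.conj, OneParam.val, OneParam.inEigenbasis, Matrix.mul_assoc]

theorem OneParam.tendsto_zpow_smul_conj {d : ℤ} (G : Matrix (Fin (α q)) (Fin (α q)) ℂ)
    (hd : ∀ i j, ψ.inEigenbasis q G i j ≠ 0 → d ≤ ψ.e q i - ψ.e q j) :
    Tendsto (fun z => z ^ (-d) • ψ.conj z q G) (𝓝[≠] 0)
      (𝓝 ((ψ.h q : Matrix _ _ ℂ) *
        weightComponent (ψ.e q) d (ψ.inEigenbasis q G) *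
        (↑(ψ.h q)⁻¹ : Matrix _ _ ℂ))) := by
  refine ((tendsto_const_nhds.mul (tendsto_zpow_smul_diagonal_mul_mul_diagonal hd)).mul
    tendsto_const_nhds).congr fun z => ?_
  simp only [ψ.conj_eq, mul_smul_comm, smul_mul_assoc]

theorem OneParam.tendsto_conj_inv_of_mem_Upsi {u : GLa α} {μ : ℂ} (hμ : μ ≠ 0)
    (hu : Tendsto (fun z => ψ.conj z q (u q)) (𝓝[≠] 0) (𝓝 (μ • 1))) :
    Tendsto (fun z => ψ.conj z q ↑(u q)⁻¹) (𝓝[≠] 0) (𝓝 (μ⁻¹ • 1)) := by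
  have hlim : (μ • 1 : Matrix (Fin (α q)) (Fin (α q)) ℂ)⁻¹ = μ⁻¹ • 1 :=
    Matrix.inv_eq_left_inv (by simp [hμ])
  rw [← hlim]
  refine (hu.matrix_inv (by simp [hμ])).congr' ?_
  filter_upwards [self_mem_nhdsWithin] with z (hz : z ≠ 0)
  refine Matrix.inv_eq_left_inv ?_
  rw [← ψ.conj_mul q hz, Units.inv_mul, ψ.conj_one q hz]

end OneParam

section Action

variable {V A : Type} (s t : A → V) (α : V → ℕ) (γ : A → ℤ) (ψ : OneParam α) {z : ℂ}

theorem attAct_bc (hz : z ≠ 0) (g : GLa α) (M : RA s t α) (a : A) :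
    attAct s t α γ ψ z (bc s t α g M) a =
      ψ.conj z (t a) (g (t a)) * attAct s t α γ ψ z M a * ψ.conj z (s a) ↑(g (s a))⁻¹ := by
  simp only [attAct, bc, OneParam.conj, Matrix.mul_smul, Matrix.smul_mul, Matrix.mul_assoc,
    ← Matrix.mul_assoc (ψ.val z⁻¹ _) (ψ.val z _), ψ.val_inv_mul_val _ hz, Matrix.one_mul]

theorem conj_mul_attAct (hz : z ≠ 0) (g : GLa α) (M : RA s t α) (a : A) :
    ψ.conj z (t a) (g (t a)) * attAct s t α γ ψ z M a =
      attAct s t α γ ψ z (bc s t α g M) a * ψ.conj z (s a) (g (s a)) := by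
  rw [attAct_bc s t α γ ψ hz, Matrix.mul_assoc, ← ψ.conj_mul _ hz, Units.inv_mul,
    ψ.conj_one _ hz, Matrix.mul_one]

variable {s t α γ ψ} {T M : RA s t α}

theorem bc_mem_Att_of_mem_Upsi (hM : M ∈ Att s t α γ ψ T) {u : GLa α} (hu : u ∈ Upsi α ψ) :
    bc s t α u M ∈ Att s t α γ ψ T := by
  obtain ⟨μ, hμ, hconv⟩ := hu
  refine tendsto_pi_nhds.2 fun a => ?_
  have hlim : Tendsto (fun z => ψ.conj z (t a) (u (t a)) * attAct s t α γ ψ z M a *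
      ψ.conj z (s a) ↑(u (s a))⁻¹) (𝓝[≠] 0)
      (𝓝 ((μ • 1 : Matrix (Fin (α (t a))) (Fin (α (t a))) ℂ) * T a *
        (μ⁻¹ • 1 : Matrix (Fin (α (s a))) (Fin (α (s a))) ℂ))) :=
    ((hconv (t a)).matrix_mul (tendsto_pi_nhds.1 hM a)).matrix_mul
      (ψ.tendsto_conj_inv_of_mem_Upsi (s a) hμ (hconv (s a)))
  rw [Matrix.smul_mul, Matrix.one_mul, Matrix.mul_smul, Matrix.mul_one, smul_smul,
    inv_mul_cancel₀ hμ, one_smul] at hlim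
  refine hlim.congr' ?_
  filter_upwards [self_mem_nhdsWithin] with z (hz : z ≠ 0)
  exact (attAct_bc s t α γ ψ hz u M a).symm

theorem intertwines_of_tendsto_zpow_smul_conj (hM : M ∈ Att s t α γ ψ T) {g : GLa α}
    (hgM : bc s t α g M ∈ Att s t α γ ψ T) {d : ℤ} {c : ∀ q, Matrix (Fin (α q)) (Fin (α q)) ℂ}
    (hc : ∀ q, Tendsto (fun z => z ^ (-d) • ψ.conj z q (g q)) (𝓝[≠] 0) (𝓝 (c q))) (a : A) :
    c (t a) * T a = T a * c (s a) := by
  refine tendsto_nhds_unique (((hc (t a)).matrix_mul (tendsto_pi_nhds.1 hM a)).congr' ?_)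
    ((tendsto_pi_nhds.1 hgM a).matrix_mul (hc (s a)))
  filter_upwards [self_mem_nhdsWithin] with z (hz : z ≠ 0)
  rw [Matrix.smul_mul, conj_mul_attAct s t α γ ψ hz, Matrix.mul_smul]

theorem mem_Upsi_of_mem_Att [Fintype V] (hT : Schurian s t α T) (hM : M ∈ Att s t α γ ψ T)
    {g : GLa α} (hgM : bc s t α g M ∈ Att s t α γ ψ T) : g ∈ Upsi α ψ := by
  classical
  let weight : (Σ q, Fin (α q) × Fin (α q)) → ℤ := fun p => ψ.e p.1 p.2.1 - ψ.e p.1 p.2.2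
  let S := Finset.univ.filter fun p : (Σ q, Fin (α q) × Fin (α q)) =>
    ψ.inEigenbasis p.1 (g p.1) p.2.1 p.2.2 ≠ 0
  rcases S.eq_empty_or_nonempty with hS | hS
  · refine ⟨1, one_ne_zero, fun q => ?_⟩
    have h0 : ψ.inEigenbasis q (g q) = 0 := Matrix.ext fun i j => by
      simpa [S] using Finset.ext_iff.1 hS ⟨q, i, j⟩
    have : Subsingleton (Matrix (Fin (α q)) (Fin (α q)) ℂ) :=
      subsingleton_of_zero_eq_one (isUnit_zero_iff.1 (h0 ▸ ψ.isUnit_inEigenbasis q (g q)))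
    exact tendsto_const_nhds.congr fun _ => Subsingleton.elim _ _
  obtain ⟨⟨q₀, i₀, j₀⟩, hp₀, hmin⟩ := S.exists_min_image weight hS
  set d := weight ⟨q₀, i₀, j₀⟩
  have hc := fun q => ψ.tendsto_zpow_smul_conj q (g q) (d := d)
    fun i j hij => hmin ⟨q, i, j⟩ (Finset.mem_filter.2 ⟨Finset.mem_univ _, hij⟩)
  obtain ⟨μ, hμ⟩ := hT _ (intertwines_of_tendsto_zpow_smul_conj hM hgM hc)
  obtain ⟨hd, hμ₀⟩ := weightComponent_eq_smul_one
    ((Units.mul_mul_inv_eq_smul_one _ _ _).1 (hμ q₀)) (Finset.mem_filter.1 hp₀).2 rfl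
  refine ⟨μ, hμ₀, fun q => ?_⟩
  have hq := hc q
  rw [hμ q, hd, neg_zero] at hq
  simp only [zpow_zero, one_smul] at hq
  exact hq

end Action

end QuivC

open QuivC Filter
open scoped Topology

variable {V A : Type} [Fintype V] [Fintype A]

theorem statement16_general (s t : A → V) (α : V → ℕ) (γ : A → ℤ)
    (T : RA s t α) (hT : Schurian s t α T)
    (ψ : OneParam α) :
    ∀ M ∈ Att s t α γ ψ T,
      {N | ∃ g : GLa α, N = bc s t α g M} ∩ Att s t α γ ψ T =
      {N | ∃ u ∈ Upsi α ψ, N = bc s t α u M} := by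
  intro M hM
  ext N
  constructor
  · rintro ⟨⟨g, rfl⟩, hgM⟩
    exact ⟨g, mem_Upsi_of_mem_Att hT hM hgM, rfl⟩
  · rintro ⟨u, hu, rfl⟩
    exact ⟨⟨u, rfl⟩, bc_mem_Att_of_mem_Upsi hM hu⟩

/-- Proposition `Uaction`.  Let `T ∈ R_α(Q)` be Schurian with a
one-parameter subgroup `ψ` satisfying `ψ(z)∗T = z.T`.  For every `M ∈ Att(T)`, the
intersection of the `Gl_α`-orbit of `M` with `Att(T)` is exactly the `U_ψ`-orbit of
`M`. -/
theorem statement16 (s t : A → V) (α : V → ℕ) (γ : A → ℤ)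
    (T : RA s t α) (hT : Schurian s t α T)
    (ψ : OneParam α) (hfix : FixedLift s t α γ ψ T) :
    ∀ M ∈ Att s t α γ ψ T,
      {N | ∃ g : GLa α, N = bc s t α g M} ∩ Att s t α γ ψ T =
      {N | ∃ u ∈ Upsi α ψ, N = bc s t α u M} :=
  statement16_general s t α γ T hT ψ
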